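/- For Im ζ ≠ 0, the integral (1/√(2π)) ∫_ℝ e^{-v²/2}/(v-ζ) dv equals i√(π/2) e^{-ζ²/2} [sign(Im ζ) − erf(−iζ/√2)]. -/

import Mathlib

/-!
For `Im ζ > 0` write `1 / (v - ζ) = i ∫_0^∞ e^{-i(v-ζ)t} dt`; Fubini turns the integral into
`i ∫_0^∞ ĝ(t) e^{iζt} dt`, where `ĝ(t) = √(2π) e^{-t²/2}` is the Fourier transform of the
Gaussian. After `t = √2 s` and completing the square this is the half-line Gaussian integral
`∫_0^∞ e^{-(s+w)²} ds` with `w = -iζ/√2`, which equals `(√π/2)(1 - erf w)`: moving the start of the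
half-line from `0` to `w` costs the segment integral `w ∫_0^1 e^{-(λw)²} dλ`, obtained by
differentiating in `λ` and swapping the two integrals. The case `Im ζ < 0` follows from `v ↦ -v`
and the oddness of `erf`.
-/

open MeasureTheory

/-- The complex error function `erf(ζ) = (2/√π) ∫_0^ζ e^{-t²} dt` along the straight
path from `0` to `ζ` (path-independent since the integrand is entire). -/
noncomputable def cerf (ζ : ℂ) : ℂ :=
  (2 / Real.sqrt Real.pi : ℂ) * ζ * ∫ t in (0:ℝ)..1, Complex.exp (-((t : ℂ) * ζ) ^ 2)

open Complex Set Filter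
open scoped Real

theorem cerf_neg (w : ℂ) : cerf (-w) = -cerf w := by
  simp [cerf]

theorem inv_eq_integral_Ioi_cexp_neg_mul {a : ℂ} (ha : 0 < a.re) :
    a⁻¹ = ∫ t in Ioi (0 : ℝ), cexp (-a * t) := by
  rw [integral_exp_mul_complex_Ioi (by simpa using ha)]
  simp

theorem integral_div_sub_eq_integral_Ioi_fourier {f : ℝ → ℂ} (hf : Integrable f) {ζ : ℂ}
    (hζ : 0 < ζ.im) :
    ∫ v : ℝ, f v / (v - ζ) =
      I * ∫ t in Ioi (0 : ℝ), (∫ v : ℝ, cexp (-I * t * v) * f v) * cexp (I * ζ * t) := by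
  set F : ℝ → ℝ → ℂ := fun v t => cexp (-I * t * v) * f v * cexp (I * ζ * t)
  have hF : ∀ v t : ℝ, F v t = f v * cexp (-(I * (v - ζ)) * t) := fun v t => by
    simp only [F]
    rw [mul_right_comm, mul_comm, ← Complex.exp_add]
    ring_nf
  have hlaplace : ∀ v : ℝ, f v / (v - ζ) = I * ∫ t in Ioi (0 : ℝ), F v t := fun v => by
    have hre : 0 < (I * (v - ζ)).re := by simpa using hζ
    have hne : (v : ℂ) - ζ ≠ 0 := fun h => by simp [h] at hre
    simp_rw [hF, integral_const_mul, ← inv_eq_integral_Ioi_cexp_neg_mul hre]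
    field_simp
  have hint : Integrable (Function.uncurry F) (volume.prod (volume.restrict (Ioi 0))) := by
    have hexp : IntegrableOn (fun t : ℝ => cexp (I * ζ * t)) (Ioi 0) :=
      integrableOn_exp_mul_complex_Ioi (by simpa using hζ) 0
    refine ((hf.mul_prod hexp).bdd_mul (f := fun p : ℝ × ℝ => cexp (-I * p.2 * p.1)) (c := 1)
      (Continuous.aestronglyMeasurable (by fun_prop)) ?_).congr ?_
    · exact Eventually.of_forall fun p => by rw [norm_exp]; simp
    · exact Eventually.of_forall fun p => by simp only [F, Function.uncurry_def, mul_assoc]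
  calc ∫ v : ℝ, f v / (v - ζ) = I * ∫ v : ℝ, ∫ t in Ioi (0 : ℝ), F v t := by
        simp_rw [hlaplace, integral_const_mul]
    _ = I * ∫ t in Ioi (0 : ℝ), ∫ v : ℝ, F v t := by rw [integral_integral_swap hint]
    _ = _ := by simp_rw [F, integral_mul_const]

theorem integral_div_sub_neg_of_even {f : ℝ → ℂ} (hf : Function.Even f) (ζ : ℂ) :
    ∫ v : ℝ, f v / (v - -ζ) = -∫ v : ℝ, f v / (v - ζ) := by
  rw [← integral_neg_eq_self, ← integral_neg]
  congr 1 with v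
  rw [hf, ofReal_neg, show -(v : ℂ) - -ζ = -(v - ζ) by ring, div_neg]

theorem integrable_cexp_neg_sq_div_two : Integrable fun v : ℝ => cexp (-(v : ℂ) ^ 2 / 2) := by
  refine (integrable_cexp_neg_mul_sq (b := 1 / 2) (by norm_num)).congr
    (Eventually.of_forall fun v => ?_)
  ring_nf

theorem fourierIntegral_cexp_neg_sq_div_two (t : ℝ) :
    ∫ v : ℝ, cexp (-I * t * v) * cexp (-(v : ℂ) ^ 2 / 2) =
      √(2 * π) * cexp (-(t : ℂ) ^ 2 / 2) := by
  have h := fourierIntegral_gaussian (b := 1 / 2) (by norm_num) (-t)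
  have hpi : (π / (1 / 2) : ℂ) ^ (1 / 2 : ℂ) = √(2 * π) := by
    rw [Real.sqrt_eq_rpow, ofReal_cpow (by positivity)]
    norm_num [div_div_eq_mul_div, mul_comm]
  rw [hpi] at h
  convert h using 3 <;> ring_nf

theorem integrable_rexp_neg_sq_add (b d : ℝ) :
    Integrable fun t : ℝ => rexp (-t ^ 2 + b * t + d) := by
  refine (integrable_cexp_quadratic (b := 1) (by simp) b d).norm.congr
    (Eventually.of_forall fun t => ?_)
  dsimp only
  rw [norm_exp]
  norm_cast
  simp

theorem re_neg_sq_add (t : ℝ) (c : ℂ) : (-(t + c) ^ 2).re = -(t + c.re) ^ 2 + c.im ^ 2 := by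
  simp only [sq, neg_re, mul_re, add_re, ofReal_re, add_im, ofReal_im, zero_add, neg_sub]
  ring

theorem norm_add_mul_cexp_neg_sq_add_le {t : ℝ} (ht : 0 ≤ t) {c : ℂ} {M : ℝ} (hc : ‖c‖ ≤ M) :
    ‖(t + c) * cexp (-(t + c) ^ 2)‖ ≤ rexp (-t ^ 2 + (2 * M + 1) * t + (M ^ 2 + M)) := by
  have hre : |c.re| ≤ M := (abs_re_le_norm c).trans hc
  have him : |c.im| ≤ M := (abs_im_le_norm c).trans hc
  have hlin : ‖(t : ℂ) + c‖ ≤ rexp (t + M) := calc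
    ‖(t : ℂ) + c‖ ≤ t + M := by
      grw [norm_add_le, hc, norm_real, Real.norm_of_nonneg ht]
    _ ≤ rexp (t + M) := by linarith [Real.add_one_le_exp (t + M)]
  have hquad : -(t + c.re) ^ 2 + c.im ^ 2 ≤ -t ^ 2 + 2 * M * t + M ^ 2 := by
    have := sq_le_sq' (abs_le.mp him).1 (abs_le.mp him).2
    nlinarith [abs_le.mp hre, sq_nonneg c.re]
  rw [norm_mul, norm_exp, re_neg_sq_add]
  calc ‖(t : ℂ) + c‖ * rexp (-(t + c.re) ^ 2 + c.im ^ 2)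
      ≤ rexp (t + M) * rexp (-t ^ 2 + 2 * M * t + M ^ 2) := by gcongr
    _ = _ := by rw [← Real.exp_add]; ring_nf

theorem tendsto_cexp_neg_sq_add (c : ℂ) :
    Tendsto (fun t : ℝ => cexp (-(t + c) ^ 2)) atTop (nhds 0) := by
  rw [tendsto_exp_nhds_zero_iff]
  simp_rw [re_neg_sq_add]
  refine tendsto_atBot_add_const_right _ _ (tendsto_neg_atTop_atBot.comp ?_)
  exact (tendsto_pow_atTop two_ne_zero).comp (tendsto_atTop_add_const_right _ _ tendsto_id)

theorem hasDerivAt_cexp_neg_sq (z : ℂ) :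
    HasDerivAt (fun z => cexp (-z ^ 2)) (-2 * z * cexp (-z ^ 2)) z := by
  refine ((hasDerivAt_pow 2 z).neg).cexp.congr_deriv ?_
  simp only [Pi.neg_apply, Nat.cast_ofNat]
  ring

theorem integral_Ioi_add_mul_cexp_neg_sq_add (c : ℂ) :
    ∫ t in Ioi (0 : ℝ), (t + c) * cexp (-(t + c) ^ 2) = cexp (-c ^ 2) / 2 := by
  have hderiv : ∀ t ∈ Ici (0 : ℝ), HasDerivAt (fun t : ℝ => -cexp (-(t + c) ^ 2) / 2)
      ((t + c) * cexp (-(t + c) ^ 2)) t := fun t _ => by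
    have hlin : HasDerivAt (fun t : ℝ => (t : ℂ) + c) 1 t := by
      simpa using (hasDerivAt_id t).ofReal_comp.add_const c
    refine (((hasDerivAt_cexp_neg_sq _).comp t hlin).neg.div_const 2).congr_deriv ?_
    ring
  have hint : IntegrableOn (fun t : ℝ => (t + c) * cexp (-(t + c) ^ 2)) (Ioi 0) := by
    refine ((integrable_rexp_neg_sq_add (2 * ‖c‖ + 1) (‖c‖ ^ 2 + ‖c‖)).integrableOn).mono'
      (by fun_prop) ?_
    refine (ae_restrict_iff' measurableSet_Ioi).mpr (Eventually.of_forall fun t ht => ?_)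
    exact norm_add_mul_cexp_neg_sq_add_le ht.le le_rfl
  have hlim := (tendsto_cexp_neg_sq_add c).neg.div_const 2
  rw [integral_Ioi_of_hasDerivAt_of_tendsto' hderiv hint (by simpa using hlim)]
  simp only [ofReal_zero, zero_add]
  ring

theorem cexp_neg_sq_add_eq_sub_integral (t : ℝ) (w : ℂ) :
    cexp (-(t + w) ^ 2) =
      cexp (-(t : ℂ) ^ 2) - 2 * w * ∫ s in (0 : ℝ)..1, (t + s * w) * cexp (-(t + s * w) ^ 2) := by
  have hderiv : ∀ s ∈ uIcc (0 : ℝ) 1, HasDerivAt (fun s : ℝ => cexp (-(t + s * w) ^ 2))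
      (-(2 * w * ((t + s * w) * cexp (-(t + s * w) ^ 2)))) s := fun s _ => by
    have hlin : HasDerivAt (fun s : ℝ => (t : ℂ) + s * w) w s := by
      simpa using ((hasDerivAt_id s).ofReal_comp.mul_const w).const_add (t : ℂ)
    refine ((hasDerivAt_cexp_neg_sq _).comp s hlin).congr_deriv ?_
    ring
  have hftc := intervalIntegral.integral_eq_sub_of_hasDerivAt hderiv
    (by apply Continuous.intervalIntegrable; fun_prop)
  rw [intervalIntegral.integral_neg, intervalIntegral.integral_const_mul] at hftc
  simp only [ofReal_one, one_mul, ofReal_zero, zero_mul, add_zero] at hftc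
  linear_combination -hftc

theorem integral_Ioi_cexp_neg_sq_add (w : ℂ) :
    ∫ t in Ioi (0 : ℝ), cexp (-(t + w) ^ 2) = √π / 2 * (1 - cerf w) := by
  set K : ℝ → ℝ → ℂ := fun t s => (t + s * w) * cexp (-(t + s * w) ^ 2)
  have hK : Integrable (Function.uncurry K)
      ((volume.restrict (Ioi 0)).prod (volume.restrict (Ioc 0 1))) := by
    refine (((integrable_rexp_neg_sq_add (2 * ‖w‖ + 1) (‖w‖ ^ 2 + ‖w‖)).integrableOn).mul_prod
      (integrable_const (1 : ℝ))).mono' (Continuous.aestronglyMeasurable (by fun_prop)) ?_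
    rw [Measure.prod_restrict, ae_restrict_iff' (measurableSet_Ioi.prod measurableSet_Ioc)]
    refine Eventually.of_forall fun p hp => ?_
    rw [mul_one]
    refine norm_add_mul_cexp_neg_sq_add_le hp.1.le ?_
    rw [norm_mul, norm_real, Real.norm_of_nonneg hp.2.1.le]
    exact mul_le_of_le_one_left (norm_nonneg w) hp.2.2
  have hgauss : ∫ t in Ioi (0 : ℝ), cexp (-(t : ℂ) ^ 2) = √π / 2 := by
    have h := congrArg ((↑) : ℝ → ℂ) (integral_gaussian_Ioi 1)
    rw [← integral_complex_ofReal] at h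
    push_cast at h
    simpa using h
  have hcerf : w * ∫ s in (0 : ℝ)..1, cexp (-(s * w) ^ 2) = √π / 2 * cerf w := by
    have : (√π : ℂ) ≠ 0 := by exact_mod_cast (Real.sqrt_pos.mpr Real.pi_pos).ne'
    rw [cerf]
    field_simp
  calc ∫ t in Ioi (0 : ℝ), cexp (-(t + w) ^ 2)
      = (∫ t in Ioi (0 : ℝ), cexp (-(t : ℂ) ^ 2)) -
          2 * w * ∫ t in Ioi (0 : ℝ), ∫ s in Ioc 0 1, K t s := by
        simp_rw [cexp_neg_sq_add_eq_sub_integral _ w, intervalIntegral.integral_of_le zero_le_one]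
        rw [integral_sub, integral_const_mul]
        · exact (integrable_cexp_neg_mul_sq (b := 1) (by simp)).integrableOn.congr_fun
            (fun t _ => by simp) measurableSet_Ioi
        · exact hK.integral_prod_left.const_mul _
    _ = √π / 2 - 2 * w * ∫ s in Ioc 0 1, ∫ t in Ioi (0 : ℝ), K t s := by
        rw [hgauss, integral_integral_swap hK]
    _ = √π / 2 * (1 - cerf w) := by
        simp_rw [K, integral_Ioi_add_mul_cexp_neg_sq_add,
          ← intervalIntegral.integral_of_le zero_le_one]
        rw [intervalIntegral.integral_div]
        linear_combination -hcerf

theorem integral_Ioi_cexp_neg_sq_div_two_mul_cexp (ζ : ℂ) :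
    ∫ t in Ioi (0 : ℝ), cexp (-(t : ℂ) ^ 2 / 2) * cexp (I * ζ * t) =
      √(π / 2) * cexp (-ζ ^ 2 / 2) * (1 - cerf (-I * ζ / √2)) := by
  have h2 : (0 : ℝ) < √2 := by positivity
  have h2c : (√2 : ℂ) ^ 2 = 2 := by exact_mod_cast Real.sq_sqrt zero_le_two
  have h2ne : (√2 : ℂ) ≠ 0 := by exact_mod_cast h2.ne'
  have hscale := integral_comp_mul_left_Ioi'
    (fun t : ℝ => cexp (-(t : ℂ) ^ 2 / 2) * cexp (I * ζ * t)) 0 h2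
  have hshift : ∀ s : ℝ, cexp (-((√2 * s : ℝ) : ℂ) ^ 2 / 2) * cexp (I * ζ * (√2 * s : ℝ)) =
      cexp (-ζ ^ 2 / 2) * cexp (-(s + -I * ζ / √2) ^ 2) := fun s => by
    rw [← Complex.exp_add, ← Complex.exp_add]
    congr 1
    field_simp
    push_cast
    linear_combination
      (-(√2 : ℂ) ^ 2 * s ^ 2 + 2 * √2 * s * I * ζ + ζ ^ 2) * h2c + 2 * ζ ^ 2 * I_sq
  have hsqrt : √2 * (√π / 2) = √(π / 2) := by
    rw [Real.sqrt_div' _ zero_le_two]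
    field_simp
    rw [Real.sq_sqrt zero_le_two]
  rw [mul_zero] at hscale
  simp_rw [← hscale, hshift, integral_const_mul, integral_Ioi_cexp_neg_sq_add, real_smul,
    ← hsqrt]
  push_cast
  ring

theorem plasmaZ_of_im_pos {ζ : ℂ} (hζ : 0 < ζ.im) :
    (√(2 * π) : ℂ)⁻¹ * ∫ v : ℝ, cexp (-(v : ℂ) ^ 2 / 2) / (v - ζ) =
      I * √(π / 2) * cexp (-ζ ^ 2 / 2) * (1 - cerf (-I * ζ / √2)) := by
  have hne : (√(2 * π) : ℂ) ≠ 0 := by exact_mod_cast (Real.sqrt_pos.mpr Real.two_pi_pos).ne'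
  rw [integral_div_sub_eq_integral_Ioi_fourier integrable_cexp_neg_sq_div_two hζ]
  simp_rw [fourierIntegral_cexp_neg_sq_div_two, mul_assoc (√(2 * π) : ℂ), integral_const_mul,
    integral_Ioi_cexp_neg_sq_div_two_mul_cexp]
  field_simp

/-- For `Im ζ ≠ 0`,
`(1/√(2π)) ∫_ℝ e^{-v²/2}/(v-ζ) dv = i√(π/2) e^{-ζ²/2}[sign(Im ζ) − erf(−iζ/√2)]`. -/
theorem plasmaZ_closed_form (ζ : ℂ) (hζ : ζ.im ≠ 0) :
    (Real.sqrt (2 * Real.pi) : ℂ)⁻¹ *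
        (∫ v : ℝ, Complex.exp (-(v : ℂ) ^ 2 / 2) / ((v : ℂ) - ζ)) =
    Complex.I * (Real.sqrt (Real.pi / 2) : ℂ) * Complex.exp (-ζ ^ 2 / 2) *
      ((if 0 < ζ.im then 1 else -1) - cerf (-Complex.I * ζ / (Real.sqrt 2 : ℂ))) := by
  rcases hζ.lt_or_gt with hneg | hpos
  · have hreflect := integral_div_sub_neg_of_even (f := fun v : ℝ => cexp (-(v : ℂ) ^ 2 / 2))
      (fun v => by simp only [ofReal_neg, neg_sq]) (-ζ)
    rw [neg_neg] at hreflect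
    rw [if_neg hneg.not_gt, hreflect, mul_neg, plasmaZ_of_im_pos (by simpa using hneg),
      show -I * -ζ / (√2 : ℂ) = -(-I * ζ / √2) by ring, cerf_neg, neg_sq]
    ring
  · rw [if_pos hpos]
    exact plasmaZ_of_im_pos hpos
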